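/- Setting $z_2 := \Delta t(\mathbf{u}\cdot\boldsymbol{\tau}) + \Delta t\,\gamma_1\bar{\eta}(-1)^{\gamma_2}K^{\gamma_2}$ with $K=\hat{k}_x^2+\hat{k}_y^2+\hat{k}_z^2>0$, $\bar\eta>0$, $\Delta t>0$: the equation $z_2=0$ has the unique solution $\gamma_1 = (-1)^{1-\gamma_2}(\mathbf{u}\cdot\boldsymbol{\tau})/(\bar\eta K^{\gamma_2})$; furthermore, with $\hat{k}_x=\hat{k}_y=\hat{k}_z=2/h$ and $\boldsymbol{\tau}=(\tau_x (2/h)^{q_x},\tau_y (2/h)^{q_y},\tau_z (2/h)^{q_z})$, this solution equals $\frac{(-1)^{1-\gamma_2}3^{-\gamma_2}}{\bar\eta}\big(u_x\tau_x 2^{q_x-2\gamma_2}h^{2\gamma_2-q_x} + u_y\tau_y 2^{q_y-2\gamma_2}h^{2\gamma_2-q_y} + u_z\tau_z 2^{q_z-2\gamma_2}h^{2\gamma_2-q_z}\big).$ -/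

import Mathlib

lemma term_key (h q : ℝ) (hh : 0 < h) (γ₂ : ℕ) :
    (2 / h) ^ q = (2:ℝ) ^ (q - 2*(γ₂:ℝ)) * h ^ (2*(γ₂:ℝ) - q) *
      ((2:ℝ) ^ (2*γ₂) / h ^ (2*γ₂)) := by
  have h2 : (0:ℝ) < 2 := by norm_num
  rw [Real.div_rpow (by norm_num) hh.le, Real.rpow_sub h2, Real.rpow_sub hh,
    show (2:ℝ)*(γ₂:ℝ) = ((2*γ₂ : ℕ):ℝ) by push_cast; ring,
    Real.rpow_natCast, Real.rpow_natCast]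
  have : (Real.rpow h q) ≠ 0 := (Real.rpow_pos_of_pos hh q).ne'
  field_simp

/-- The cancellation condition `z₂ = 0` has a unique solution `γ₁`, and with
`k̂x = k̂y = k̂z = 2/h` and the growth model `τ`, this solution equals the
closed-form hyperviscosity coefficient of the paper. -/
theorem gamma1_closed_form
    (γ₂ : ℕ) (Δt ηbar h ux uy uz τx τy τz qx qy qz kx ky kz : ℝ)
    (hΔt : 0 < Δt) (hη : 0 < ηbar) (hh : 0 < h)
    (hkx : kx = 2 / h) (hky : ky = 2 / h) (hkz : kz = 2 / h)
    (D : ℝ)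
    (hD : D = ux * (τx * (2 / h) ^ qx) + uy * (τy * (2 / h) ^ qy) +
      uz * (τz * (2 / h) ^ qz)) :
    (∀ γ₁ : ℝ,
      Δt * D + Δt * γ₁ * ηbar * (-1 : ℝ) ^ γ₂ *
          (kx ^ 2 + ky ^ 2 + kz ^ 2) ^ γ₂ = 0 ↔
        γ₁ = (-1 : ℝ) ^ ((1 : ℤ) - γ₂) * D /
          (ηbar * (kx ^ 2 + ky ^ 2 + kz ^ 2) ^ γ₂)) ∧
    (-1 : ℝ) ^ ((1 : ℤ) - γ₂) * D /
        (ηbar * (kx ^ 2 + ky ^ 2 + kz ^ 2) ^ γ₂) =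
      ((-1 : ℝ) ^ ((1 : ℤ) - γ₂) * (3 : ℝ) ^ (-(γ₂ : ℤ)) / ηbar) *
        (ux * τx * (2 : ℝ) ^ (qx - 2 * γ₂) * h ^ (2 * (γ₂ : ℝ) - qx) +
         uy * τy * (2 : ℝ) ^ (qy - 2 * γ₂) * h ^ (2 * (γ₂ : ℝ) - qy) +
         uz * τz * (2 : ℝ) ^ (qz - 2 * γ₂) * h ^ (2 * (γ₂ : ℝ) - qz)) := by
  subst hkx hky hkz
  have hh' : h ≠ 0 := hh.ne'
  set K : ℝ := (2/h)^2 + (2/h)^2 + (2/h)^2 with hKdef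
  have hKpos : 0 < K := by positivity
  have hKp : (0:ℝ) < K ^ γ₂ := pow_pos hKpos _
  have hPP : ((-1:ℝ)^γ₂) * ((-1:ℝ)^γ₂) = 1 := by
    rw [← mul_pow]; norm_num
  have hneg : ((-1:ℝ)) ^ ((1:ℤ) - γ₂) = -((-1:ℝ)^γ₂) := by
    rw [zpow_sub₀ (by norm_num : (-1:ℝ) ≠ 0), zpow_one, zpow_natCast]
    rcases Nat.even_or_odd γ₂ with h1 | h1
    · rw [h1.neg_one_pow]; norm_num
    · rw [h1.neg_one_pow]; norm_num
  constructor
  · intro γ₁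
    rw [hneg]
    constructor
    · intro heq
      have h1 : D + γ₁ * ηbar * ((-1:ℝ)^γ₂) * K ^ γ₂ = 0 := by
        rcases mul_eq_zero.mp (show Δt * (D + γ₁ * ηbar * ((-1:ℝ)^γ₂) * K ^ γ₂) = 0 by
          linear_combination heq) with h2 | h2
        · exact absurd h2 hΔt.ne'
        · exact h2
      rw [eq_div_iff (by positivity : ηbar * K ^ γ₂ ≠ 0)]
      linear_combination ((-1:ℝ)^γ₂) * h1 - γ₁ * ηbar * K ^ γ₂ * hPP
    · intro heq
      subst heq
      have hdm : -(-1:ℝ)^γ₂ * D / (ηbar * K ^ γ₂) * (ηbar * K ^ γ₂) = -(-1:ℝ)^γ₂ * D :=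
        div_mul_cancel₀ _ (by positivity)
      linear_combination Δt * (-1:ℝ)^γ₂ * hdm - Δt * D * hPP
  · rw [hneg, hD, term_key h qx hh γ₂, term_key h qy hh γ₂, term_key h qz hh γ₂,
      zpow_neg, zpow_natCast]
    set ax := (2:ℝ) ^ (qx - 2*(γ₂:ℝ)) * h ^ (2*(γ₂:ℝ) - qx) with hax
    set ay := (2:ℝ) ^ (qy - 2*(γ₂:ℝ)) * h ^ (2*(γ₂:ℝ) - qy) with hay
    set az := (2:ℝ) ^ (qz - 2*(γ₂:ℝ)) * h ^ (2*(γ₂:ℝ) - qz) with haz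
    have hK2 : K ^ γ₂ = (3:ℝ)^γ₂ * ((2:ℝ)^(2*γ₂) / h^(2*γ₂)) := by
      rw [hKdef]
      rw [show (2/h)^2 + (2/h)^2 + (2/h)^2 = 3 * (2^2/h^2) by field_simp; ring]
      rw [mul_pow, div_pow, ← pow_mul, ← pow_mul]
    rw [hK2]
    have h3 : ((3:ℝ)^γ₂) ≠ 0 := by positivity
    have h2g : ((2:ℝ)^(2*γ₂)) ≠ 0 := by positivity
    have hhg : (h^(2*γ₂)) ≠ 0 := by positivity
    field_simp
    ring
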